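/- Let G be an α-critical graph and u a vertex of G. Then α(G − u) = α(G). -/

import Mathlib

open SimpleGraph

variable {V : Type*}

/-- The maximum size of an independent (stable) set of a simple graph. -/
noncomputable def alpha (G : SimpleGraph V) : ℕ :=
  sSup {n | ∃ s : Finset V, (∀ x ∈ s, ∀ y ∈ s, ¬ G.Adj x y) ∧ s.card = n}

/-- A graph is α-critical if deleting any edge increases α. -/
def AlphaCritical (G : SimpleGraph V) : Prop :=
  ∀ x y : V, G.Adj x y → alpha G < alpha (G.deleteEdges {s(x, y)})

/-- `G` contains a totally odd K₄-subdivision: four distinct branch vertices joined by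
six internally disjoint paths of odd length. -/
def HasTOK4 (G : SimpleGraph V) : Prop :=
  ∃ b : Fin 4 → V, Function.Injective b ∧
  ∃ P : ∀ i j : Fin 4, G.Walk (b i) (b j),
    (∀ i j, i ≠ j → (P i j).IsPath) ∧
    (∀ i j, i ≠ j → Odd (P i j).length) ∧
    (∀ i j k l : Fin 4, i ≠ j → k ≠ l → s(i, j) ≠ s(k, l) →
      ∀ v : V, v ∈ (P i j).support → v ∈ (P k l).support →
        (v = b i ∨ v = b j) ∧ (v = b k ∨ v = b l))

/-- `G` is (isomorphic to) a totally odd K₄-subdivision: it has one that uses all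
vertices and all edges of `G`. -/
def IsTOK4 (G : SimpleGraph V) : Prop :=
  ∃ b : Fin 4 → V, Function.Injective b ∧
  ∃ P : ∀ i j : Fin 4, G.Walk (b i) (b j),
    (∀ i j, i ≠ j → (P i j).IsPath) ∧
    (∀ i j, i ≠ j → Odd (P i j).length) ∧
    (∀ i j k l : Fin 4, i ≠ j → k ≠ l → s(i, j) ≠ s(k, l) →
      ∀ v : V, v ∈ (P i j).support → v ∈ (P k l).support →
        (v = b i ∨ v = b j) ∧ (v = b k ∨ v = b l)) ∧
    (∀ v : V, ∃ i j, i ≠ j ∧ v ∈ (P i j).support) ∧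
    (∀ e ∈ G.edgeSet, ∃ i j, i ≠ j ∧ e ∈ (P i j).edges)

/-- `G` is an odd cycle: a cycle of odd length passing through all vertices
and using all edges of `G`. -/
def IsOddCycle (G : SimpleGraph V) : Prop :=
  ∃ (v : V) (w : G.Walk v v), w.IsCycle ∧ Odd w.length ∧
    (∀ u : V, u ∈ w.support) ∧ (∀ e ∈ G.edgeSet, e ∈ w.edges)

/-- `G` is isomorphic to the complete graph on one vertex. -/
def IsK1 (G : SimpleGraph V) : Prop := Nonempty (G ≃g (⊤ : SimpleGraph (Fin 1)))

/-- `G` is isomorphic to the complete graph on two vertices. -/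
def IsK2 (G : SimpleGraph V) : Prop := Nonempty (G ≃g (⊤ : SimpleGraph (Fin 2)))

/-
Deleting a vertex lowers α by at most one, and deleting `u` from `G - uw` gives `G - u`.
So for an edge `uw`, criticality yields `α(G) < α(G - uw) ≤ α(G - u) + 1`, while
`α(G - u) ≤ α(G)` as for every induced subgraph.
-/

namespace SimpleGraph

variable {G : SimpleGraph V}

theorem alpha_eq_indepNum (G : SimpleGraph V) : alpha G = G.indepNum := by
  unfold alpha indepNum
  congr 1
  ext n
  refine exists_congr fun s ↦ ?_
  rw [isNIndepSet_iff, isIndepSet_iff]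
  refine and_congr_left' ⟨fun h x hx y hy _ ↦ h x hx y hy, fun h x hx y hy hxy ↦ ?_⟩
  exact h hx hy (G.ne_of_adj hxy) hxy

theorem isIndepSet_induce_iff {s : Set V} {t : Set s} :
    (G.induce s).IsIndepSet t ↔ G.IsIndepSet (Subtype.val '' t) := by
  simp [isIndepSet_iff, Set.Pairwise]

theorem indepNum_induce_le [Finite V] (s : Set V) : (G.induce s).indepNum ≤ G.indepNum := by
  obtain ⟨t, ht⟩ := (G.induce s).exists_isNIndepSet_indepNum
  rw [← ht.card_eq, ← Finset.card_map (.subtype _)]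
  apply IsIndepSet.card_le_indepNum
  rw [Finset.coe_map]
  exact isIndepSet_induce_iff.mp ht.isIndepSet

theorem IsIndepSet.card_le_indepNum_induce [Finite V] {s : Set V} {t : Finset V}
    (ht : G.IsIndepSet t) (hts : ↑t ⊆ s) : t.card ≤ (G.induce s).indepNum := by
  classical
  have hmap : (t.subtype (· ∈ s)).map (.subtype _) = t := by
    rw [Finset.subtype_map, Finset.filter_true_of_mem fun x hx ↦ hts hx]
  rw [← hmap, Finset.coe_map] at ht
  rw [← hmap, Finset.card_map]
  exact IsIndepSet.card_le_indepNum (isIndepSet_induce_iff.mpr ht)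

theorem indepNum_le_indepNum_induce_ne_add_one [Finite V] (u : V) :
    G.indepNum ≤ (G.induce {v | v ≠ u}).indepNum + 1 := by
  classical
  obtain ⟨s, hs⟩ := G.exists_isNIndepSet_indepNum
  have herase : (s.erase u).card ≤ (G.induce {v | v ≠ u}).indepNum :=
    IsIndepSet.card_le_indepNum_induce (hs.isIndepSet.mono (s.erase_subset u))
      fun _ hx ↦ Finset.ne_of_mem_erase hx
  have := Finset.pred_card_le_card_erase (s := s) (a := u)
  rw [hs.card_eq] at this
  omega

theorem induce_setOf_ne_deleteEdges (u w : V) :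
    (G.deleteEdges {s(u, w)}).induce {v | v ≠ u} = G.induce {v | v ≠ u} := by
  ext ⟨x, hx⟩ ⟨y, hy⟩
  simp only [comap_adj, Function.Embedding.coe_subtype, deleteEdges_adj,
    Set.mem_singleton_iff, and_iff_left_iff_imp]
  rintro - hxy
  rcases Sym2.eq_iff.mp hxy with ⟨rfl, -⟩ | ⟨-, rfl⟩
  exacts [hx rfl, hy rfl]

end SimpleGraph

theorem stmt_11 {V : Type*} [Fintype V] (G : SimpleGraph V) (hG : AlphaCritical G)
    (u : V) (hu : ∃ w, G.Adj u w) :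
    alpha (G.induce {v | v ≠ u}) = alpha G := by
  obtain ⟨w, huw⟩ := hu
  have hcrit := hG u w huw
  have hdel := (G.deleteEdges {s(u, w)}).indepNum_le_indepNum_induce_ne_add_one u
  rw [induce_setOf_ne_deleteEdges] at hdel
  have hind := G.indepNum_induce_le {v | v ≠ u}
  simp only [alpha_eq_indepNum] at hcrit ⊢
  omega
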